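/- arXiv:0712.0097 — 5 statements merged into one kernel-verified Lean document; each statement's English description precedes it below -/
import Mathlib

section
/- With δ = 1 - Σ_j n^{-|φ(A_j)|}, ε_j = |φ(A_j)| + log_n p(A_j), and ε'_j the truncation of ε_j to [-1,1], the redundancy R = N̄^{-1} Σ_j p(A_j) ε_j of a decipherable code satisfies R ≥ N̄^{-1} ( δ / ln n + (ln n)/(2n) Σ_j p(A_j) (ε'_j)² ). -/
open scoped BigOperators

/-- Probability of a word: product of the letter probabilities. -/
def wordProb {m : ℕ} (p : Fin m → ℝ) (A : List (Fin m)) : ℝ := (A.map p).prod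

lemma wordProb_pos {m : ℕ} {p : Fin m → ℝ} (hp : ∀ i, 0 < p i) (B : List (Fin m)) :
    0 < wordProb p B := by
  apply List.prod_pos
  intro a ha
  simp only [List.mem_map] at ha
  obtain ⟨i, _, rfl⟩ := ha
  exact hp i

lemma wordProb_append {m : ℕ} (p : Fin m → ℝ) (B : List (Fin m)) (c : Fin m) :
    wordProb p (B ++ [c]) = wordProb p B * p c := by
  simp [wordProb]

lemma ofFn_prefix {α : Type*} (x : ℕ → α) {k j : ℕ} (h : k ≤ j) :
    List.ofFn (fun i : Fin k => x i) <+: List.ofFn (fun i : Fin j => x i) := by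
  have heq : List.ofFn (fun i : Fin k => x i) = (List.ofFn (fun i : Fin j => x i)).take k := by
    apply List.ext_getElem
    · simp [h]
    · intro i h1 h2; simp
  rw [heq]; exact List.take_prefix _ _

lemma key_complete {m : ℕ} (hm : 0 < m) (p : Fin m → ℝ) (hp : ∀ i, 0 < p i)
    (hsum : ∑ i, p i = 1) (S : Finset (List (Fin m)))
    (hcomp : ∀ x : ℕ → Fin m, ∃ k : ℕ, List.ofFn (fun i : Fin k => x i) ∈ S) :
    ∀ (k : ℕ) (B : List (Fin m)),
      (∀ A ∈ S, B <+: A → A.length ≤ B.length + k) →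
      (∃ A ∈ S, A <+: B) ∨
        wordProb p B ≤ ∑ A ∈ S.filter (fun A => B <+: A), wordProb p A := by
  intro k
  induction k with
  | zero =>
    intro B hlen
    set x : ℕ → Fin m := fun i => if h : i < B.length then B.get ⟨i, h⟩ else ⟨0, hm⟩ with hx
    obtain ⟨k0, hA⟩ := hcomp x
    have hB : B = List.ofFn (fun i : Fin B.length => x i) := by
      conv_lhs => rw [← List.ofFn_get B]
      congr 1
      funext i
      simp [hx, i.isLt]
    rcases le_or_gt k0 B.length with hk | hk
    · exact Or.inl ⟨_, hA, hB ▸ ofFn_prefix x hk⟩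
    · exfalso
      have hpre : B <+: List.ofFn (fun i : Fin k0 => x i) := hB ▸ ofFn_prefix x hk.le
      have h2 := hlen _ hA hpre
      simp only [List.length_ofFn] at h2
      omega
  | succ k ih =>
    intro B hlen
    by_cases h : ∃ A ∈ S, A <+: B
    · exact Or.inl h
    · right
      have hc : ∀ c : Fin m, wordProb p (B ++ [c]) ≤
          ∑ A ∈ S.filter (fun A => B ++ [c] <+: A), wordProb p A := by
        intro c
        have hlen' : ∀ A ∈ S, B ++ [c] <+: A → A.length ≤ (B ++ [c]).length + k := by
          intro A hAS hp'
          have h2 := hlen A hAS ((List.prefix_append B [c]).trans hp')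
          simp only [List.length_append, List.length_cons, List.length_nil]
          omega
        rcases ih (B ++ [c]) hlen' with ⟨A, hAS, hApre⟩ | hle
        · have hAlen : A.length ≤ B.length + 1 := by
            have := hApre.length_le; simpa using this
          have hAeq : A = B ++ [c] := by
            rcases Nat.lt_or_ge A.length (B.length + 1) with h1 | h1
            · exact absurd ⟨A, hAS, List.prefix_of_prefix_length_le hApre
                (List.prefix_append B [c]) (by omega)⟩ h
            · exact hApre.eq_of_length (by simp; omega)
          refine Finset.single_le_sum (fun i _ => (wordProb_pos hp i).le) ?_
          rw [Finset.mem_filter]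
          exact ⟨hAeq ▸ hAS, List.prefix_refl _⟩
        · exact hle
      have hsplit : wordProb p B = ∑ c : Fin m, wordProb p (B ++ [c]) := by
        simp only [wordProb_append]
        rw [← Finset.mul_sum, hsum, mul_one]
      have hdisj : ((Finset.univ : Finset (Fin m)) : Set (Fin m)).PairwiseDisjoint
          (fun c => S.filter (fun A => B ++ [c] <+: A)) := by
        intro c _ c' _ hcc'
        apply Finset.disjoint_left.mpr
        intro A hA hA'
        rw [Finset.mem_filter] at hA hA'
        have h1 := hA.2; have h2 := hA'.2
        have h3 := List.prefix_of_prefix_length_le h1 h2 (by simp)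
        have h4 := h3.eq_of_length (by simp)
        have h5 : [c] = [c'] := List.append_cancel_left h4
        simp at h5
        exact hcc' h5
      have hsub : Finset.univ.biUnion (fun c => S.filter (fun A => B ++ [c] <+: A)) ⊆
          S.filter (fun A => B <+: A) := by
        intro A hA
        simp only [Finset.mem_biUnion, Finset.mem_filter] at hA ⊢
        obtain ⟨c, _, hAS, hpre⟩ := hA
        exact ⟨hAS, (List.prefix_append B [c]).trans hpre⟩
      rw [hsplit]
      calc ∑ c : Fin m, wordProb p (B ++ [c])
          ≤ ∑ c : Fin m, ∑ A ∈ S.filter (fun A => B ++ [c] <+: A), wordProb p A :=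
            Finset.sum_le_sum (fun c _ => hc c)
        _ = ∑ A ∈ Finset.univ.biUnion (fun c => S.filter (fun A => B ++ [c] <+: A)),
              wordProb p A := (Finset.sum_biUnion hdisj).symm
        _ ≤ ∑ A ∈ S.filter (fun A => B <+: A), wordProb p A :=
            Finset.sum_le_sum_of_subset_of_nonneg hsub (fun i _ _ => (wordProb_pos hp i).le)

lemma exp_aux1 {t : ℝ} (ht : 0 ≤ t) : t^2/2 ≤ 1 + (t-1) * Real.exp t := by
  rcases le_or_gt 1 t with h1 | h1
  · have h := Real.sum_le_exp_of_nonneg ht 4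
    simp [Finset.sum_range_succ, Nat.factorial] at h
    nlinarith [mul_nonneg (sub_nonneg.mpr h1) (sub_nonneg.mpr h)]
  · have hb := Real.exp_bound (x := t) (by rw [abs_of_nonneg ht]; linarith) (n := 4) (by norm_num)
    rw [abs_of_nonneg ht] at hb
    simp [Finset.sum_range_succ, Nat.factorial] at hb
    rw [abs_le] at hb
    have h2 : Real.exp t ≤ 1 + t + t^2/2 + t^3/6 + t^4 * (5/96) := by
      have := hb.2; norm_num at this ⊢; linarith
    have h1t : 0 ≤ 1 - t := by linarith
    nlinarith [mul_nonneg h1t (sub_nonneg.mpr h2), pow_nonneg ht 3, pow_nonneg ht 4,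
      pow_nonneg ht 5]

lemma exp_aux2 {t : ℝ} (ht : 0 ≤ t) : t^2/2 * Real.exp (-t) ≤ Real.exp (-t) - 1 + t := by
  have h := exp_aux1 ht
  have he : Real.exp (-t) * Real.exp t = 1 := by
    rw [← Real.exp_add]; simp
  nlinarith [Real.exp_pos t, Real.exp_pos (-t)]

lemma exp_aux3 {u t : ℝ} (h : (0 ≤ u ∧ u ≤ t) ∨ (t ≤ u ∧ u ≤ 0)) :
    Real.exp (-u) - 1 + u ≤ Real.exp (-t) - 1 + t := by
  have he : Real.exp (-t) = Real.exp (-u) * Real.exp (u - t) := by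
    rw [← Real.exp_add]; ring_nf
  have h2 := Real.add_one_le_exp (u - t)
  rcases h with ⟨h0, hut⟩ | ⟨hut, h0⟩
  · have h3 : Real.exp (-u) ≤ 1 := Real.exp_le_one_iff.mpr (by linarith)
    nlinarith [Real.exp_pos (-u)]
  · have h3 : 1 ≤ Real.exp (-u) := Real.one_le_exp_iff.mpr (by linarith)
    nlinarith [Real.exp_pos (-u)]

lemma exp_core {L ε : ℝ} (hL : 0 < L) :
    L^2 * Real.exp (-L) * (max (-1) (min 1 ε))^2 / 2 ≤ Real.exp (-(ε*L)) - 1 + ε*L := by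
  set ε' := max (-1) (min 1 ε) with hε'
  have hε'1 : -1 ≤ ε' := le_max_left _ _
  have hε'2 : ε' ≤ 1 := max_le (by norm_num) (min_le_left _ _)
  have hstep1 : Real.exp (-(ε'*L)) - 1 + ε'*L ≤ Real.exp (-(ε*L)) - 1 + ε*L := by
    apply exp_aux3
    rcases le_or_gt 0 ε with h0 | h0
    · left
      have hle : ε' ≤ ε := by
        rw [hε']
        rcases le_or_gt ε 1 with h1 | h1
        · simp [min_eq_right h1]; linarith
        · simp [min_eq_left h1.le]; linarith
      constructor
      · have h4 : 0 ≤ ε' := le_max_of_le_right (le_min (by norm_num) h0)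
        positivity
      · exact mul_le_mul_of_nonneg_right hle hL.le
    · right
      have hmin : min 1 ε = ε := min_eq_right (by linarith)
      have hle : ε ≤ ε' := by rw [hε', hmin]; exact le_max_right _ _
      have hε'0 : ε' ≤ 0 := by
        rw [hε', hmin]; exact max_le (by norm_num) h0.le
      constructor
      · exact mul_le_mul_of_nonneg_right hle hL.le
      · exact mul_nonpos_of_nonpos_of_nonneg hε'0 hL.le
  have hstep2 : L^2 * Real.exp (-L) * ε'^2 / 2 ≤ Real.exp (-(ε'*L)) - 1 + ε'*L := by
    rcases le_or_gt 0 ε' with h0 | h0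
    · have hu : 0 ≤ ε' * L := by positivity
      have h := exp_aux2 hu
      have hle : Real.exp (-L) ≤ Real.exp (-(ε'*L)) := by
        apply Real.exp_le_exp.mpr
        nlinarith
      nlinarith [sq_nonneg (ε'*L), mul_pow ε' L 2]
    · have hu : 0 ≤ -(ε' * L) := by nlinarith
      have h := Real.sum_le_exp_of_nonneg hu 3
      simp [Finset.sum_range_succ] at h
      have hl1 : Real.exp (-L) ≤ 1 := Real.exp_le_one_iff.mpr (by linarith)
      nlinarith [sq_nonneg (ε'*L), mul_pow ε' L 2, sq_nonneg ε', sq_nonneg L, mul_pos hL hL]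
  calc L^2 * Real.exp (-L) * ε'^2 / 2 ≤ Real.exp (-(ε'*L)) - 1 + ε'*L := hstep2
    _ ≤ _ := hstep1

/-- Lower bound of Theorem 1: with `δ = 1 - Σ_j n^{-|φ(A_j)|}`,
`ε_j = |φ(A_j)| + log_n p(A_j)` and `ε'_j` the truncation of `ε_j` to `[-1,1]`,
the redundancy `R = N̄⁻¹ Σ_j p(A_j) ε_j` satisfies
`R ≥ N̄⁻¹ (δ / ln n + (ln n)/(2n) Σ_j p(A_j) (ε'_j)²)`. -/
theorem redundancy_lower_bound {m n : ℕ} (hm : 2 ≤ m) (hn : 2 ≤ n)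
    (p : Fin m → ℝ) (hp : ∀ i, 0 < p i) (hsum : ∑ i, p i = 1)
    (S : Finset (List (Fin m)))
    (hne : ∀ A ∈ S, A ≠ ([] : List (Fin m)))
    (hpf : ∀ A ∈ S, ∀ B ∈ S, A <+: B → A = B)
    (hcomp : ∀ x : ℕ → Fin m, ∃ k : ℕ, List.ofFn (fun i : Fin k => x i) ∈ S)
    (ℓ : List (Fin m) → ℕ)
    (hkraft : ∑ A ∈ S, (n : ℝ) ^ (-(ℓ A : ℝ)) ≤ 1) :
    (∑ A ∈ S, wordProb p A * A.length)⁻¹ *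
        ∑ A ∈ S, wordProb p A * ((ℓ A : ℝ) + Real.logb n (wordProb p A)) ≥
      (∑ A ∈ S, wordProb p A * A.length)⁻¹ *
        ((1 - ∑ A ∈ S, (n : ℝ) ^ (-(ℓ A : ℝ))) / Real.log n +
          Real.log n / (2 * n) *
            ∑ A ∈ S, wordProb p A *
              (max (-1) (min 1 ((ℓ A : ℝ) + Real.logb n (wordProb p A)))) ^ 2) := by
  have hm0 : 0 < m := by omega
  have hn1 : (1:ℝ) < n := by exact_mod_cast Nat.lt_of_lt_of_le one_lt_two hn
  have hnpos : (0:ℝ) < n := by linarith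
  set L := Real.log n with hLdef
  have hL : 0 < L := Real.log_pos hn1
  have hQ : 1 ≤ ∑ A ∈ S, wordProb p A := by
    rcases key_complete hm0 p hp hsum S hcomp (S.sup List.length) []
        (fun A hA _ => by simpa using Finset.le_sup (f := List.length) hA) with
      ⟨A, hA, hpre⟩ | hle
    · exact absurd (List.prefix_nil.mp hpre) (hne A hA)
    · have hfil : S.filter (fun A => [] <+: A) = S :=
        Finset.filter_true_of_mem (fun A _ => List.nil_prefix)
      rw [hfil] at hle
      simpa [wordProb] using hle
  set ε : List (Fin m) → ℝ := fun A => (ℓ A : ℝ) + Real.logb n (wordProb p A) with hεdef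
  set e' : List (Fin m) → ℝ := fun A => max (-1) (min 1 (ε A)) with he'def
  have hpoint : ∀ A ∈ S,
      wordProb p A - (n:ℝ)^(-(ℓ A:ℝ)) + L^2 * (n:ℝ)⁻¹ / 2 * (wordProb p A * (e' A)^2)
        ≤ wordProb p A * ε A * L := by
    intro A hA
    have hq : 0 < wordProb p A := wordProb_pos hp A
    set q := wordProb p A with hqdef
    have hεL : ε A * L = (ℓ A : ℝ) * L + Real.log q := by
      simp only [hεdef, Real.logb]
      rw [← hLdef, add_mul, div_mul_cancel₀ _ hL.ne']
    have hr : (n:ℝ)^(-(ℓ A:ℝ)) = q * Real.exp (-(ε A * L)) := by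
      have h1 : q * Real.exp (-(ε A * L)) = Real.exp (-((ℓ A : ℝ) * L)) := by
        rw [hεL, neg_add, Real.exp_add, Real.exp_neg (Real.log q), Real.exp_log hq]
        field_simp
      rw [h1, Real.rpow_def_of_pos hnpos, ← hLdef]
      ring_nf
    have hc := exp_core (L := L) (ε := ε A) hL
    have hexpL : Real.exp (-L) = (n:ℝ)⁻¹ := by
      rw [Real.exp_neg, hLdef, Real.exp_log hnpos]
    rw [hexpL] at hc
    rw [hr]
    have hmul := mul_le_mul_of_nonneg_left hc hq.le
    have he'eq : max (-1) (min 1 (ε A)) = e' A := rfl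
    rw [he'eq] at hmul
    nlinarith [hmul]
  have hsum2 := Finset.sum_le_sum hpoint
  rw [Finset.sum_add_distrib, Finset.sum_sub_distrib, ← Finset.mul_sum, ← Finset.sum_mul] at hsum2
  have hNinv : 0 ≤ (∑ A ∈ S, wordProb p A * A.length)⁻¹ :=
    inv_nonneg.mpr (Finset.sum_nonneg fun A _ =>
      mul_nonneg (wordProb_pos hp A).le (Nat.cast_nonneg _))
  rw [ge_iff_le]
  apply mul_le_mul_of_nonneg_left _ hNinv
  refine le_of_mul_le_mul_right ?_ hL
  set R := ∑ A ∈ S, (n:ℝ)^(-(ℓ A:ℝ)) with hRdef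
  set T := ∑ A ∈ S, wordProb p A * (e' A)^2 with hTdef
  have hlhs : ((1 - R) / L + L / (2 * n) * T) * L = (1 - R) + L^2 * (n:ℝ)⁻¹ / 2 * T := by
    field_simp
  rw [hlhs]
  linarith [hsum2, hQ]
end

section
/- The redundancy of any decipherable word-based code satisfies R ≥ N̄^{-1} · (ln n)/(2n) · Σ_j p(A_j) ‖log_n p(A_j)‖², where ‖x‖ denotes the distance from x to the nearest integer. -/
open scoped BigOperators

/-- Distance from a real number to its nearest integer. -/
noncomputable def distNearestInt (x : ℝ) : ℝ := |x - round x|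

/-- core quadratic bound: `y²/2 ≤ e^y (y-1) + 1` for `y ≥ 0`. -/
lemma aux_quad (y : ℝ) (hy : 0 ≤ y) : y ^ 2 / 2 ≤ Real.exp y * (y - 1) + 1 := by
  set g : ℝ → ℝ := fun s => Real.exp s * (s - 1) + 1 - s ^ 2 / 2 with hg
  have key : ∀ x : ℝ, HasDerivAt g (x * (Real.exp x - 1)) x := by
    intro x
    have h1 : HasDerivAt (fun s : ℝ => Real.exp s * (s - 1))
        (Real.exp x * (x - 1) + Real.exp x * 1) x :=
      (Real.hasDerivAt_exp x).mul ((hasDerivAt_id x).sub_const 1)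
    have h2 : HasDerivAt (fun s : ℝ => s ^ 2 / 2) ((2 : ℕ) * x ^ 1 / 2) x :=
      (hasDerivAt_pow 2 x).div_const 2
    have := (h1.add_const 1).sub h2
    refine this.congr_deriv ?_
    push_cast
    ring
  have hmono : MonotoneOn g (Set.Ici (0 : ℝ)) := by
    apply monotoneOn_of_deriv_nonneg (convex_Ici 0)
    · exact (Continuous.continuousOn (by continuity))
    · intro x _
      exact ((key x).differentiableAt).differentiableWithinAt
    · intro x hx
      rw [(key x).deriv]
      have hx' : (0:ℝ) < x := by simpa using hx
      have : (1:ℝ) ≤ Real.exp x := Real.one_le_exp hx'.le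
      nlinarith
  have h0 : g 0 ≤ g y := hmono (Set.self_mem_Ici) hy hy
  simp only [hg, Real.exp_zero] at h0
  nlinarith [h0]

/-- `y²/2 · e^{-y} ≤ e^{-y} - 1 + y` for `y ≥ 0`. -/
lemma aux_A (y : ℝ) (hy : 0 ≤ y) : y ^ 2 / 2 * Real.exp (-y) ≤ Real.exp (-y) - 1 + y := by
  have h := aux_quad y hy
  have he : Real.exp (-y) * Real.exp y = 1 := by rw [← Real.exp_add]; simp
  have hp : 0 < Real.exp (-y) := Real.exp_pos _
  nlinarith [mul_le_mul_of_nonneg_left h hp.le]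

/-- monotonicity of `h(x) = e^{-x} - 1 + x` on nonnegatives. -/
lemma aux_mono {y x : ℝ} (hy : 0 ≤ y) (hyx : y ≤ x) :
    Real.exp (-y) - 1 + y ≤ Real.exp (-x) - 1 + x := by
  have h1 : Real.exp (-x) = Real.exp (-y) * Real.exp (y - x) := by
    rw [← Real.exp_add]; ring_nf
  have h2 : 1 + (y - x) ≤ Real.exp (y - x) := by linarith [Real.add_one_le_exp (y - x)]
  have h3 : Real.exp (-y) ≤ 1 := Real.exp_le_one_iff.2 (by linarith)
  have h4 : (0:ℝ) < Real.exp (-y) := Real.exp_pos _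
  nlinarith [mul_le_mul_of_nonneg_left h2 h4.le]

/-- `h(x) ≥ h(|x|)`. -/
lemma aux_refl (x : ℝ) : Real.exp (-|x|) - 1 + |x| ≤ Real.exp (-x) - 1 + x := by
  rcases abs_cases x with ⟨h, _⟩ | ⟨h, hx⟩
  · rw [h]
  · rw [h]
    have hs : -x ≤ Real.sinh (-x) := Real.self_le_sinh_iff.2 (by linarith)
    rw [Real.sinh_eq] at hs
    simp only [neg_neg] at hs ⊢
    linarith

/-- pointwise bound: if `0 ≤ y ≤ |x|` and `y ≤ log n`, `1 ≤ n`, then `y²/(2n) ≤ e^{-x} - 1 + x`. -/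
lemma aux_D {x y : ℝ} {nr : ℝ} (hn : 1 ≤ nr) (hy : 0 ≤ y) (hyx : y ≤ |x|)
    (hyl : y ≤ Real.log nr) : y ^ 2 / (2 * nr) ≤ Real.exp (-x) - 1 + x := by
  have h1 : y ^ 2 / 2 * Real.exp (-y) ≤ Real.exp (-x) - 1 + x :=
    le_trans (aux_A y hy) (le_trans (aux_mono hy hyx) (aux_refl x))
  have h2 : Real.exp y ≤ nr := by
    calc Real.exp y ≤ Real.exp (Real.log nr) := Real.exp_le_exp.2 hyl
    _ = nr := Real.exp_log (by linarith)
  have h3 : Real.exp (-y) * Real.exp y = 1 := by rw [← Real.exp_add]; simp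
  have h4 : 0 < Real.exp y := Real.exp_pos _
  have h5 : (1:ℝ)/nr ≤ Real.exp (-y) := by
    rw [div_le_iff₀ (by linarith), Real.exp_neg]
    rw [inv_mul_eq_div, le_div_iff₀ h4]
    linarith
  have h6 : y ^ 2 / (2 * nr) = y ^ 2 / 2 * (1 / nr) := by ring
  rw [h6]
  exact le_trans (mul_le_mul_of_nonneg_left h5 (by positivity)) h1

lemma per_term {n : ℕ} (hn : 2 ≤ n) (pA : ℝ) (hpA : 0 < pA) (k : ℕ) :
    Real.log n / (2 * n) * (pA * (distNearestInt (Real.logb n pA)) ^ 2)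
      + (1 / Real.log n) * (pA - (n : ℝ) ^ (-(k : ℝ)))
      ≤ pA * ((k : ℝ) + Real.logb n pA) := by
  have hn1 : (1 : ℝ) < n := by exact_mod_cast hn.trans_lt' one_lt_two
  have hL : 0 < Real.log n := Real.log_pos hn1
  set L := Real.log n with hLdef
  set b := Real.logb n pA with hb
  set d := distNearestInt b with hd
  set q := (n : ℝ) ^ (-(k : ℝ)) with hq
  have hd0 : 0 ≤ d := abs_nonneg _
  have hd2 : d ≤ 1 / 2 := abs_sub_round b
  have hde : d ≤ |(k : ℝ) + b| := by
    have := round_le b (-(k : ℤ))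
    rw [hd, distNearestInt]
    calc |b - round b| ≤ |b - ((-(k : ℤ) : ℤ) : ℝ)| := this
    _ = |(k : ℝ) + b| := by push_cast; rw [sub_neg_eq_add, add_comm]
  -- the exponential identity
  have hx : Real.exp (-(L * ((k : ℝ) + b))) = q * pA⁻¹ := by
    have h1 : L * b = Real.log pA := by
      rw [hb, Real.logb]
      exact mul_div_cancel₀ _ hL.ne'
    have h2 : -(L * ((k : ℝ) + b)) = L * (-(k : ℝ)) + (- Real.log pA) := by
      rw [← h1]; ring
    rw [h2, Real.exp_add, Real.exp_neg, Real.exp_log hpA]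
    congr 1
    rw [hq, Real.rpow_def_of_pos (by positivity : (0:ℝ) < (n:ℝ))]
  -- apply the pointwise bound
  have H : (L * d) ^ 2 / (2 * (n : ℝ)) ≤ Real.exp (-(L * ((k : ℝ) + b))) - 1
      + L * ((k : ℝ) + b) := by
    apply aux_D hn1.le (by positivity)
    · rw [abs_mul, abs_of_pos hL]
      exact mul_le_mul_of_nonneg_left hde hL.le
    · calc L * d ≤ L * (1 / 2) := mul_le_mul_of_nonneg_left hd2 hL.le
      _ ≤ L := by linarith
  rw [hx] at H
  have H2 := mul_le_mul_of_nonneg_left H hpA.le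
  have hexp : pA * (q * pA⁻¹ - 1 + L * ((k : ℝ) + b))
      = q - pA + L * (pA * ((k : ℝ) + b)) := by field_simp
  rw [hexp] at H2
  have key : L * (L / (2 * n) * (pA * d ^ 2) + (1 / L) * (pA - q))
      ≤ L * (pA * ((k : ℝ) + b)) := by
    have h1 : L * (L / (2 * n) * (pA * d ^ 2) + (1 / L) * (pA - q))
        = pA * ((L * d) ^ 2 / (2 * (n : ℝ))) + (pA - q) := by
      have hn0 : (0:ℝ) < (n:ℝ) := by positivity
      field_simp
    rw [h1]
    linarith
  exact (mul_le_mul_iff_right₀ hL).mp key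

/-- Corollary of Theorem 1: the redundancy of any decipherable word-based code
satisfies `R ≥ N̄⁻¹ (ln n)/(2n) Σ_j p(A_j) ‖log_n p(A_j)‖²`. -/
theorem redundancy_nearest_int_bound {m n : ℕ} (hm : 2 ≤ m) (hn : 2 ≤ n)
    (p : Fin m → ℝ) (hp : ∀ i, 0 < p i) (hsum : ∑ i, p i = 1)
    (S : Finset (List (Fin m)))
    (hne : ∀ A ∈ S, A ≠ ([] : List (Fin m)))
    (hpf : ∀ A ∈ S, ∀ B ∈ S, A <+: B → A = B)
    (hcomp : ∀ x : ℕ → Fin m, ∃ k : ℕ, List.ofFn (fun i : Fin k => x i) ∈ S)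
    (hprob : ∑ A ∈ S, wordProb p A = 1)
    (ℓ : List (Fin m) → ℕ)
    (hkraft : ∑ A ∈ S, (n : ℝ) ^ (-(ℓ A : ℝ)) ≤ 1) :
    (∑ A ∈ S, wordProb p A * A.length)⁻¹ *
        ∑ A ∈ S, wordProb p A * ((ℓ A : ℝ) + Real.logb n (wordProb p A)) ≥
      (∑ A ∈ S, wordProb p A * A.length)⁻¹ * (Real.log n / (2 * n)) *
        ∑ A ∈ S, wordProb p A * (distNearestInt (Real.logb n (wordProb p A))) ^ 2 := by
  have hn1 : (1 : ℝ) < n := by exact_mod_cast hn.trans_lt' one_lt_two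
  have hL : 0 < Real.log n := Real.log_pos hn1
  have hpw : ∀ A : List (Fin m), 0 < wordProb p A := by
    intro A
    apply List.prod_pos
    intro a ha
    obtain ⟨i, _, rfl⟩ := List.mem_map.1 ha
    exact hp i
  -- key sum inequality
  have hsumle : Real.log n / (2 * n) *
      ∑ A ∈ S, wordProb p A * (distNearestInt (Real.logb n (wordProb p A))) ^ 2 ≤
      ∑ A ∈ S, wordProb p A * ((ℓ A : ℝ) + Real.logb n (wordProb p A)) := by
    have step : ∑ A ∈ S, (Real.log n / (2 * n) *
          (wordProb p A * (distNearestInt (Real.logb n (wordProb p A))) ^ 2)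
        + (1 / Real.log n) * (wordProb p A - (n : ℝ) ^ (-(ℓ A : ℝ))))
        ≤ ∑ A ∈ S, wordProb p A * ((ℓ A : ℝ) + Real.logb n (wordProb p A)) := by
      apply Finset.sum_le_sum
      intro A _
      exact per_term hn _ (hpw A) (ℓ A)
    rw [Finset.sum_add_distrib, ← Finset.mul_sum, ← Finset.mul_sum,
      Finset.sum_sub_distrib, hprob] at step
    have hnn : 0 ≤ (1 / Real.log n) * (1 - ∑ A ∈ S, (n : ℝ) ^ (-(ℓ A : ℝ))) := by
      apply mul_nonneg (by positivity)
      linarith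
    linarith
  rw [ge_iff_le, mul_assoc]
  apply mul_le_mul_of_nonneg_left hsumle
  apply inv_nonneg.2
  apply Finset.sum_nonneg
  intro A _
  exact mul_nonneg (hpw A).le (by positivity)
end

section
/- Let f(k_1,...,k_m) = Σ_{i=1}^m k_i d_i be a linear form with real coefficients d_i, and suppose d_m is irrational. Then there exist infinitely many positive integers T such that for every integer vector (k_1,...,k_m) there exist integers k'_m and k''_m with 0 ≤ k'_m < T and 0 ≤ k''_m < T satisfying {f(k_1,...,k_{m-1}, k_m + k'_m)} ≤ 2/T and 1 - {f(k_1,...,k_{m-1}, k_m + k''_m)} ≤ 2/T, where {·} denotes the fractional part. -/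
open scoped BigOperators

set_option maxHeartbeats 1000000


lemma grid_lemma (x : ℝ) (q : ℕ) (hq : 0 < q) (p : ℤ)
    (hcop : IsCoprime p (q : ℤ)) (r : ℤ) (hr0 : 0 ≤ r) (hr : r < (q : ℤ)) :
    ∃ j : ℤ, 0 ≤ j ∧ j < (q : ℤ) ∧
      Int.fract (x + (j : ℝ) * ((p : ℝ) / q)) = (Int.fract ((q : ℝ) * x) + r) / q := by
  obtain ⟨u, v, huv⟩ := hcop
  have hq0 : (0:ℤ) < (q:ℤ) := by exact_mod_cast hq
  have hqR : (0:ℝ) < (q:ℝ) := by exact_mod_cast hq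
  set n : ℤ := ⌊(q:ℝ) * x⌋ with hn
  refine ⟨(u * (r - n)) % q, Int.emod_nonneg _ hq0.ne',
    Int.emod_lt_of_pos _ hq0, ?_⟩
  set j : ℤ := (u * (r - n)) % q with hj
  have hjdef : j = u * (r - n) - (q:ℤ) * (u * (r - n) / q) := Int.emod_def _ _
  set c : ℤ := -(v * (r - n)) - (u * (r - n) / (q:ℤ)) * p with hc
  have hjp : j * p = r - n + (q:ℤ) * c := by
    rw [hc, hjdef]; linear_combination (r - n) * huv
  set s : ℝ := Int.fract ((q:ℝ) * x) with hs
  have hsx : (q:ℝ) * x = (n:ℝ) + s := by rw [hs, hn]; exact (Int.floor_add_fract _).symm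
  have key : x + (j:ℝ) * ((p:ℝ)/q) = (s + r)/q + (c:ℝ) := by
    have : (j:ℝ) * (p:ℝ) = (r:ℝ) - n + (q:ℝ) * c := by exact_mod_cast congrArg (Int.cast : ℤ → ℝ) hjp
    field_simp
    nlinarith [this, hsx]
  rw [key, Int.fract_add_intCast, Int.fract_eq_self.mpr ?_]
  constructor
  · have := Int.fract_nonneg ((q:ℝ) * x)
    have hrR : (0:ℝ) ≤ (r:ℝ) := by exact_mod_cast hr0
    positivity
  · have h1 : s < 1 := Int.fract_lt_one _
    have hrR : (r:ℝ) ≤ (q:ℝ) - 1 := by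
      have : r ≤ (q:ℤ) - 1 := by omega
      exact_mod_cast this
    rw [div_lt_one hqR]; linarith

lemma fract_shift (y δ : ℝ) (h0 : 0 ≤ Int.fract y + δ) (h1 : Int.fract y + δ < 1) :
    Int.fract (y + δ) = Int.fract y + δ := by
  have h : y + δ = (⌊y⌋ : ℝ) + (Int.fract y + δ) := by rw [Int.fract]; ring
  rw [h, Int.fract_intCast_add, Int.fract_eq_self.mpr ⟨h0, h1⟩]

lemma approx_lemma (α x : ℝ) (q : ℕ) (hq : 2 ≤ q) (p : ℤ)
    (hcop : IsCoprime p (q : ℤ)) (hθ : |(q : ℝ) * α - p| < 1 / q) :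
    (∃ j : ℤ, 0 ≤ j ∧ j < (q : ℤ) ∧ Int.fract (x + (j : ℝ) * α) ≤ 2 / q) ∧
    (∃ j : ℤ, 0 ≤ j ∧ j < (q : ℤ) ∧ 1 - Int.fract (x + (j : ℝ) * α) ≤ 2 / q) := by
  have hq0 : 0 < q := by omega
  have hqR : (0:ℝ) < (q:ℝ) := by exact_mod_cast hq0
  have hqR2 : (2:ℝ) ≤ (q:ℝ) := by exact_mod_cast hq
  set θ : ℝ := (q:ℝ) * α - p with hθdef
  have hθ1 : |θ| < 1 / q := hθ
  have hθq : |θ| * q < 1 := (lt_div_iff₀ hqR).mp hθ1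
  have hα : ∀ j : ℤ, x + (j:ℝ) * α = (x + (j:ℝ) * ((p:ℝ)/q)) + (j:ℝ) * θ / q := by
    intro j; field_simp; ring
  set s : ℝ := Int.fract ((q:ℝ) * x) with hs
  have hs0 : 0 ≤ s := Int.fract_nonneg _
  have hs1 : s < 1 := Int.fract_lt_one _
  have main : ∀ r : ℤ, 0 ≤ r → r < (q:ℤ) →
      (∀ δ : ℝ, -(1/q) < δ → δ < 1/q → (0 ≤ θ → 0 ≤ δ) → (θ ≤ 0 → δ ≤ 0) →
        0 ≤ (s + r)/q + δ ∧ (s + r)/q + δ < 1) →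
      ∃ j : ℤ, 0 ≤ j ∧ j < (q:ℤ) ∧ ∃ δ : ℝ, -1 < δ * q ∧ δ * q < 1 ∧
        (0 ≤ θ → 0 ≤ δ) ∧ (θ ≤ 0 → δ ≤ 0) ∧
        Int.fract (x + (j:ℝ) * α) = (s + r)/q + δ := by
    intro r hr0 hr hok
    obtain ⟨j, hj0, hjq, hfr⟩ := grid_lemma x q hq0 p hcop r hr0 hr
    have hj0R : (0:ℝ) ≤ (j:ℝ) := by exact_mod_cast hj0
    have hjqR : (j:ℝ) ≤ (q:ℝ) := by exact_mod_cast hjq.le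
    set δ : ℝ := (j:ℝ) * θ / q with hδdef
    have hja : |(j:ℝ)| * |θ| ≤ (q:ℝ) * |θ| := by
      rw [abs_of_nonneg hj0R]
      exact mul_le_mul_of_nonneg_right hjqR (abs_nonneg θ)
    have hδabs : |δ| < 1/q := by
      rcases eq_or_lt_of_le hj0R with h | h
      · rw [hδdef, ← h]; simpa using by positivity
      · rw [hδdef, abs_div, abs_mul, abs_of_pos hqR, div_lt_div_iff₀ hqR hqR]
        nlinarith [abs_nonneg θ]
    have habs := abs_lt.mp hδabs
    have hsignp : 0 ≤ θ → 0 ≤ δ := fun h => by rw [hδdef]; positivity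
    have hsignn : θ ≤ 0 → δ ≤ 0 := fun h => by
      rw [hδdef]
      exact div_nonpos_of_nonpos_of_nonneg (mul_nonpos_of_nonneg_of_nonpos hj0R h) hqR.le
    obtain ⟨hok0, hok1⟩ := hok δ habs.1 habs.2 hsignp hsignn
    refine ⟨j, hj0, hjq, δ, ?_, (lt_div_iff₀ hqR).mp habs.2, hsignp, hsignn, ?_⟩
    · have h' := mul_lt_mul_of_pos_right habs.1 hqR
      have h'' : -(1/(q:ℝ)) * q = -1 := by field_simp
      linarith
    · rw [hα j, fract_shift _ _ (hfr ▸ hok0) (hfr ▸ hok1), hfr]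
  have expand : ∀ (r : ℤ) (δ : ℝ), (s + (r:ℝ))/q + δ = (s + r + δ*q)/q := by
    intro r δ; field_simp
  constructor
  · -- small fract
    rcases le_or_gt 0 θ with hsign | hsign
    · have hok : ∀ δ : ℝ, -(1/(q:ℝ)) < δ → δ < 1/q → (0 ≤ θ → 0 ≤ δ) → (θ ≤ 0 → δ ≤ 0) →
          0 ≤ (s + ((0:ℤ):ℝ))/q + δ ∧ (s + ((0:ℤ):ℝ))/q + δ < 1 := by
        intro δ hd1 hd2 hpos _
        have hδ0 : 0 ≤ δ := hpos hsign
        rw [expand, le_div_iff₀ hqR, div_lt_one hqR]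
        push_cast
        exact ⟨by nlinarith, by nlinarith [(lt_div_iff₀ hqR).mp hd2]⟩
      obtain ⟨j, h0, h1, δ, hd1, hd2, hpos, _, hval⟩ := main 0 le_rfl (by omega) hok
      refine ⟨j, h0, h1, ?_⟩
      have hdq : 0 ≤ δ * q := mul_nonneg (hpos hsign) hqR.le
      rw [hval, expand, div_le_div_iff_of_pos_right hqR]
      push_cast; linarith
    · have hok : ∀ δ : ℝ, -(1/(q:ℝ)) < δ → δ < 1/q → (0 ≤ θ → 0 ≤ δ) → (θ ≤ 0 → δ ≤ 0) →
          0 ≤ (s + ((1:ℤ):ℝ))/q + δ ∧ (s + ((1:ℤ):ℝ))/q + δ < 1 := by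
        intro δ hd1 hd2 _ hneg
        have hδ0 : δ ≤ 0 := hneg hsign.le
        have h' := mul_lt_mul_of_pos_right hd1 hqR
        have h'' : -(1/(q:ℝ)) * q = -1 := by field_simp
        rw [expand, le_div_iff₀ hqR, div_lt_one hqR]
        have hdq : δ * q ≤ 0 := mul_nonpos_of_nonpos_of_nonneg hδ0 hqR.le
        push_cast
        exact ⟨by linarith, by linarith⟩
      obtain ⟨j, h0, h1, δ, hd1, hd2, _, hneg, hval⟩ := main 1 (by omega) (by omega) hok
      refine ⟨j, h0, h1, ?_⟩
      have hdq : δ * q ≤ 0 := mul_nonpos_of_nonpos_of_nonneg (hneg hsign.le) hqR.le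
      rw [hval, expand, div_le_div_iff_of_pos_right hqR]
      push_cast; linarith
  · -- large fract
    rcases le_or_gt 0 θ with hsign | hsign
    · have hok : ∀ δ : ℝ, -(1/(q:ℝ)) < δ → δ < 1/q → (0 ≤ θ → 0 ≤ δ) → (θ ≤ 0 → δ ≤ 0) →
          0 ≤ (s + (((q:ℤ) - 2 : ℤ):ℝ))/q + δ ∧ (s + (((q:ℤ) - 2 : ℤ):ℝ))/q + δ < 1 := by
        intro δ hd1 hd2 hpos _
        have hδ0 : 0 ≤ δ := hpos hsign
        have hd2' : δ * q < 1 := (lt_div_iff₀ hqR).mp hd2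
        have hdq : 0 ≤ δ * q := mul_nonneg hδ0 hqR.le
        rw [expand, le_div_iff₀ hqR, div_lt_one hqR]
        push_cast
        exact ⟨by linarith, by linarith⟩
      obtain ⟨j, h0, h1, δ, hd1, hd2, hpos, _, hval⟩ :=
        main ((q:ℤ) - 2) (by omega) (by omega) hok
      refine ⟨j, h0, h1, ?_⟩
      have hdq : 0 ≤ δ * q := mul_nonneg (hpos hsign) hqR.le
      rw [hval, expand, sub_le_iff_le_add, ← add_div, le_div_iff₀ hqR]
      push_cast; linarith
    · have hok : ∀ δ : ℝ, -(1/(q:ℝ)) < δ → δ < 1/q → (0 ≤ θ → 0 ≤ δ) → (θ ≤ 0 → δ ≤ 0) →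
          0 ≤ (s + (((q:ℤ) - 1 : ℤ):ℝ))/q + δ ∧ (s + (((q:ℤ) - 1 : ℤ):ℝ))/q + δ < 1 := by
        intro δ hd1 hd2 _ hneg
        have hδ0 : δ ≤ 0 := hneg hsign.le
        have h' := mul_lt_mul_of_pos_right hd1 hqR
        have h'' : -(1/(q:ℝ)) * q = -1 := by field_simp
        have hdq : δ * q ≤ 0 := mul_nonpos_of_nonpos_of_nonneg hδ0 hqR.le
        rw [expand, le_div_iff₀ hqR, div_lt_one hqR]
        push_cast
        exact ⟨by linarith, by linarith⟩
      obtain ⟨j, h0, h1, δ, hd1, hd2, _, hneg, hval⟩ :=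
        main ((q:ℤ) - 1) (by omega) (by omega) hok
      refine ⟨j, h0, h1, ?_⟩
      rw [hval, expand, sub_le_iff_le_add, ← add_div, le_div_iff₀ hqR]
      push_cast; linarith


lemma finite_den_le (B : ℕ) (ξ : ℝ) :
    {q : ℚ | q.den ≤ B ∧ |ξ - (q : ℝ)| < 1}.Finite := by
  set C : ℤ := ⌈(|ξ| + 1) * B⌉ with hC
  apply Set.Finite.subset (Set.Finite.image
    (f := fun nd : ℤ × ℕ => (nd.1 : ℚ) / (nd.2 : ℚ))
    ((Set.finite_Icc (-C) C).prod (Set.finite_Icc 1 B)))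
  rintro q ⟨hden, habs⟩
  refine ⟨(q.num, q.den), ⟨?_, q.pos, hden⟩, by push_cast [Rat.num_div_den]; rfl⟩
  have h1 : |(q : ℝ)| < |ξ| + 1 := by
    have := abs_sub_abs_le_abs_sub (q : ℝ) ξ
    rw [abs_sub_comm] at this
    linarith
  have h2 : |(q.num : ℝ)| ≤ (|ξ| + 1) * B := by
    have hnum : (q.num : ℝ) = (q : ℝ) * q.den := by
      rw [Rat.cast_def]; field_simp
    rw [hnum, abs_mul, abs_of_pos (by exact_mod_cast q.pos : (0:ℝ) < (q.den:ℝ))]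
    have hdenB : (q.den : ℝ) ≤ B := by exact_mod_cast hden
    have : (0:ℝ) ≤ |(q:ℝ)| := abs_nonneg _
    nlinarith
  have h3 : |q.num| ≤ C := by
    have : ((|q.num| : ℤ) : ℝ) ≤ (C : ℝ) := by
      push_cast
      exact h2.trans (Int.le_ceil _)
    exact_mod_cast this
  exact Set.mem_Icc.mpr (abs_le.mp h3)

/-- Lemma 1: if the last coefficient `d_m` of a linear form
`f(k₁,…,k_m) = Σ k_i d_i` is irrational, then there exist infinitely many
positive integers `T` such that for every integer vector `(k₁,…,k_m)` there
exist `0 ≤ k'_m < T` and `0 ≤ k''_m < T` with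
`{f(k₁,…,k_{m-1},k_m+k'_m)} ≤ 2/T` and `1 - {f(k₁,…,k_{m-1},k_m+k''_m)} ≤ 2/T`. -/
theorem linear_form_approx {m : ℕ} (d : Fin (m + 1) → ℝ)
    (hd : Irrational (d (Fin.last m))) :
    {T : ℕ | 0 < T ∧ ∀ k : Fin (m + 1) → ℤ,
      ∃ k' k'' : ℤ, 0 ≤ k' ∧ k' < (T : ℤ) ∧ 0 ≤ k'' ∧ k'' < (T : ℤ) ∧
        Int.fract (∑ i,
          ((Function.update k (Fin.last m) (k (Fin.last m) + k')) i : ℝ) * d i)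
          ≤ 2 / (T : ℝ) ∧
        1 - Int.fract (∑ i,
          ((Function.update k (Fin.last m) (k (Fin.last m) + k'')) i : ℝ) * d i)
          ≤ 2 / (T : ℝ)}.Infinite := by
  set α : ℝ := d (Fin.last m) with hα
  have hsum : ∀ (k : Fin (m + 1) → ℤ) (v : ℤ),
      ∑ i, ((Function.update k (Fin.last m) v) i : ℝ) * d i
        = (∑ i, (k i : ℝ) * d i) + ((v : ℝ) - (k (Fin.last m) : ℝ)) * α := by
    intro k v
    rw [← Finset.add_sum_erase Finset.univ _ (Finset.mem_univ (Fin.last m)),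
        ← Finset.add_sum_erase Finset.univ (fun i => (k i : ℝ) * d i)
          (Finset.mem_univ (Fin.last m))]
    have h1 : ∑ x ∈ Finset.univ.erase (Fin.last m),
        ((Function.update k (Fin.last m) v) x : ℝ) * d x
        = ∑ x ∈ Finset.univ.erase (Fin.last m), (k x : ℝ) * d x :=
      Finset.sum_congr rfl fun i hi => by
        rw [Function.update_of_ne (Finset.ne_of_mem_erase hi)]
    rw [h1, Function.update_self, hα]
    ring
  apply Set.infinite_of_forall_exists_gt
  intro N
  -- find a good rational approximation with large denominator
  have hinf := Real.infinite_rat_abs_sub_lt_one_div_den_sq_of_irrational hd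
  have hdiff := hinf.diff (finite_den_le (N + 2) α)
  obtain ⟨q0, hq0mem, hq0not⟩ := hdiff.nonempty
  have hq0mem' : |α - (q0 : ℝ)| < 1 / (q0.den : ℝ) ^ 2 := hq0mem
  have hden1 : 1 ≤ q0.den := q0.pos
  have hdenR : (0:ℝ) < (q0.den : ℝ) := by exact_mod_cast q0.pos
  have habs1 : |α - (q0 : ℝ)| < 1 := by
    refine hq0mem'.trans_le ?_
    rw [div_le_one (by positivity)]
    have : (1:ℝ) ≤ (q0.den : ℝ) := by exact_mod_cast hden1
    nlinarith
  have hdenN : N + 2 < q0.den := by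
    by_contra h
    exact hq0not ⟨by omega, habs1⟩
  set T : ℕ := q0.den with hT
  have hT2 : 2 ≤ T := by omega
  have hcop : IsCoprime (q0.num) (T : ℤ) := by
    rw [Int.isCoprime_iff_gcd_eq_one]
    simpa [Int.gcd] using q0.reduced
  have hθ : |(T : ℝ) * α - q0.num| < 1 / T := by
    have hcast : (q0 : ℝ) = (q0.num : ℝ) / (q0.den : ℝ) := by
      rw [Rat.cast_def]
    have heq : (T : ℝ) * α - q0.num = (T : ℝ) * (α - q0) := by
      rw [hcast]; field_simp; rw [hT]; ring
    rw [heq, abs_mul, abs_of_pos hdenR]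
    calc (T : ℝ) * |α - (q0 : ℝ)| < (T : ℝ) * (1 / (T : ℝ) ^ 2) :=
          mul_lt_mul_of_pos_left hq0mem' hdenR
      _ = 1 / T := by field_simp
  refine ⟨T, ⟨by omega, ?_⟩, by omega⟩
  intro k
  set x : ℝ := ∑ i, (k i : ℝ) * d i with hx
  obtain ⟨⟨j1, hj10, hj1T, hj1⟩, ⟨j2, hj20, hj2T, hj2⟩⟩ :=
    approx_lemma α x T hT2 q0.num hcop hθ
  refine ⟨j1, j2, hj10, hj1T, hj20, hj2T, ?_, ?_⟩
  · rw [hsum k (k (Fin.last m) + j1)]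
    push_cast
    convert hj1 using 3 <;> ring
  · rw [hsum k (k (Fin.last m) + j2)]
    push_cast
    convert hj2 using 4 <;> ring
end

section
/- Let M' and M'' be sets of nonempty words, and let M' ∧ M'' be the set of words in M' ∪ M'' that cannot be written as A'A'' with A' ∈ M' ∪ M'' and A'' nonempty. If every infinite message (infinite sequence over the alphabet) begins with a word from M', then every infinite message can be uniquely factored as a concatenation of words from M' ∧ M''. -/
open scoped BigOperators

/-- `wedge M' M''` is the prefix-free extension `M' ∧ M''`: the words of
`M' ∪ M''` not expressible as `A'A''` with `A' ∈ M' ∪ M''` and `A''` nonempty. -/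
def wedge {α : Type*} (M' M'' : Set (List α)) : Set (List α) :=
  {A | A ∈ M' ∪ M'' ∧
    ¬∃ A' A'' : List α, A = A' ++ A'' ∧ A' ∈ M' ∪ M'' ∧ A'' ≠ []}

namespace WedgeAux

variable {α : Type*}

/-- The prefix of length `n` of the infinite message `y`. -/
def pref (y : ℕ → α) (n : ℕ) : List α := List.ofFn (fun i : Fin n => y i)

@[simp] lemma pref_length (y : ℕ → α) (n : ℕ) : (pref y n).length = n := by
  simp [pref]

lemma pref_self_length (y : ℕ → α) (n : ℕ) : pref y n = pref y (pref y n).length := by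
  rw [pref_length]

lemma pref_append (y : ℕ → α) {m n : ℕ} (h : m ≤ n) :
    pref y m ++ List.ofFn (fun i : Fin (n - m) => y (m + i)) = pref y n := by
  apply List.ext_getElem
  · simp [pref]; omega
  · intro i h1 h2
    simp only [pref, List.getElem_append, List.getElem_ofFn, List.length_ofFn]
    split
    · rfl
    · congr 1; omega

lemma pref_take (y : ℕ → α) {m n : ℕ} (h : m ≤ n) :
    (pref y n).take m = pref y m := by
  apply List.ext_getElem
  · simp [pref, h]
  · intro i h1 h2
    simp [pref]

/-- Uniqueness of the wedge-prefix of an infinite message. -/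
lemma wedge_pref_unique (M' M'' : Set (List α)) {y : ℕ → α} {A B : List α}
    (hA : A ∈ wedge M' M'') (hB : B ∈ wedge M' M'')
    (hAy : A = pref y A.length) (hBy : B = pref y B.length) : A = B := by
  have main : ∀ C D : List α, C ∈ wedge M' M'' → D ∈ wedge M' M'' →
      C = pref y C.length → D = pref y D.length → C.length < D.length → False := by
    intro C D hC hD hCy hDy hlt
    apply hD.2
    refine ⟨C, List.ofFn (fun i : Fin (D.length - C.length) => y (C.length + i)), ?_, hC.1, ?_⟩
    · calc D = pref y D.length := hDy
        _ = pref y C.length ++ List.ofFn (fun i : Fin (D.length - C.length) =>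
              y (C.length + i)) := (pref_append y hlt.le).symm
        _ = C ++ _ := by rw [← hCy]
    · intro hnil
      have := congrArg List.length hnil
      simp at this
      omega
  rcases lt_trichotomy A.length B.length with h | h | h
  · exact (main A B hA hB hAy hBy h).elim
  · rw [hAy, hBy, h]
  · exact (main B A hB hA hBy hAy h).elim

/-- The length of the minimal prefix of `y` lying in `M' ∪ M''`. -/
noncomputable def N (M' M'' : Set (List α)) (y : ℕ → α) : ℕ :=
  sInf {k | pref y k ∈ M' ∪ M''}

/-- The minimal prefix in `M' ∪ M''` is in the wedge. -/
lemma pref_min_wedge (M' M'' : Set (List α)) {y : ℕ → α}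
    (hb : ∃ k, pref y k ∈ M' ∪ M'') :
    pref y (N M' M'' y) ∈ wedge M' M'' := by
  refine ⟨Nat.sInf_mem hb, ?_⟩
  rintro ⟨A', A'', heq, hA', hne⟩
  have hlen : A'.length + A''.length = N M' M'' y := by
    have := congrArg List.length heq
    simpa using this.symm
  have hA''pos : 0 < A''.length := List.length_pos_iff.mpr hne
  have hlt : A'.length < N M' M'' y := by omega
  have hA'eq : A' = pref y A'.length := by
    rw [← pref_take y hlt.le, heq, List.take_left]
  exact Nat.notMem_of_lt_sInf hlt (hA'eq ▸ hA' : pref y A'.length ∈ M' ∪ M'')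

/-- Offsets of the factorization. -/
noncomputable def off (M' M'' : Set (List α)) (x : ℕ → α) : ℕ → ℕ
  | 0 => 0
  | k + 1 => off M' M'' x k + N M' M'' (fun i => x (off M' M'' x k + i))

/-- The factorization. -/
noncomputable def theF (M' M'' : Set (List α)) (x : ℕ → α) (k : ℕ) : List α :=
  pref (fun i => x (off M' M'' x k + i)) (N M' M'' (fun i => x (off M' M'' x k + i)))

variable {M' M'' : Set (List α)}

lemma theF_mem (hb : ∀ y : ℕ → α, ∃ k, pref y k ∈ M' ∪ M'') (x : ℕ → α) (k : ℕ) :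
    theF M' M'' x k ∈ wedge M' M'' :=
  pref_min_wedge M' M'' (hb _)

@[simp] lemma theF_length (x : ℕ → α) (k : ℕ) :
    (theF M' M'' x k).length = N M' M'' (fun i => x (off M' M'' x k + i)) := by
  simp [theF]

lemma sum_theF_length (x : ℕ → α) (k : ℕ) :
    (∑ i ∈ Finset.range k, (theF M' M'' x i).length) = off M' M'' x k := by
  induction k with
  | zero => simp [off]
  | succ k ih => rw [Finset.sum_range_succ, ih, theF_length]; rfl

lemma theF_spec (x : ℕ → α) (k : ℕ) :
    theF M' M'' x k = pref (fun i => x (off M' M'' x k + i)) (theF M' M'' x k).length := by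
  rw [theF_length]; rfl

end WedgeAux

open WedgeAux in
/-- Lemma 12: if every infinite message begins with a word from `M'`, then
every infinite message has a unique factorization into words of `M' ∧ M''`. -/
theorem wedge_unique_factorization {α : Type*} [Fintype α]
    (M' M'' : Set (List α))
    (hne' : ∀ A ∈ M', A ≠ ([] : List α)) (hne'' : ∀ A ∈ M'', A ≠ ([] : List α))
    (hbegin : ∀ x : ℕ → α, ∃ k : ℕ, List.ofFn (fun i : Fin k => x i) ∈ M')
    (x : ℕ → α) :
    ∃! f : ℕ → List α,
      (∀ k, f k ∈ wedge M' M'') ∧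
      ∀ k, f k = List.ofFn (fun j : Fin (f k).length =>
        x ((∑ i ∈ Finset.range k, (f i).length) + j)) := by
  have hb : ∀ y : ℕ → α, ∃ k, pref y k ∈ M' ∪ M'' := fun y =>
    ⟨(hbegin y).choose, Or.inl (hbegin y).choose_spec⟩
  refine ⟨theF M' M'' x, ⟨theF_mem hb x, ?_⟩, ?_⟩
  · intro k
    have := theF_spec (M' := M') (M'' := M'') x k
    rw [sum_theF_length x k]
    exact this
  · intro g ⟨hg1, hg2⟩
    have key : ∀ k, (∑ i ∈ Finset.range k, (g i).length) = off M' M'' x k ∧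
        g k = theF M' M'' x k := by
      intro k
      induction k with
      | zero =>
        have h0 : (∑ i ∈ Finset.range 0, (g i).length) = off M' M'' x 0 := by simp [off]
        refine ⟨h0, ?_⟩
        have hgy : g 0 = pref (fun i => x (off M' M'' x 0 + i)) (g 0).length := by
          have := hg2 0
          rw [h0] at this
          exact this
        exact wedge_pref_unique M' M'' (hg1 0) (theF_mem hb x 0) hgy (theF_spec x 0)
      | succ k ih =>
        have hsum : (∑ i ∈ Finset.range (k + 1), (g i).length) = off M' M'' x (k + 1) := by
          rw [Finset.sum_range_succ, ih.1, ih.2, theF_length]; rfl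
        refine ⟨hsum, ?_⟩
        have hgy : g (k + 1) = pref (fun i => x (off M' M'' x (k + 1) + i)) (g (k + 1)).length := by
          have := hg2 (k + 1)
          rw [hsum] at this
          exact this
        exact wedge_pref_unique M' M'' (hg1 (k + 1)) (theF_mem hb x (k + 1)) hgy
          (theF_spec x (k + 1))
    funext k
    exact (key k).2
end

section
/- Let the source be Bernoulli with m equiprobable symbols (p_i = 1/m) and let the output alphabet have n symbols. Then there exist infinitely many pairs of positive integers (X, L) with L - 1/X ≤ X log_n m ≤ L; for any such pair, taking all m^X input words of length X as the words A_j and encoding each by a distinct output word of length L yields a decipherable uniform-on-the-output code whose redundancy satisfies R ≤ N̄^{-2}, where N̄ = X. -/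
open Real

namespace EquiCode

open scoped Classical in
noncomputable def step (α : ℝ) (σ : ℕ × ℕ × ℤ × ℤ) : ℕ × ℕ × ℤ × ℤ :=
  if ((σ.2.2.1 + σ.2.2.2 : ℤ) : ℝ) < ((σ.1 + σ.2.1 : ℕ) : ℝ) * α then
    (σ.1 + σ.2.1, σ.2.1, σ.2.2.1 + σ.2.2.2, σ.2.2.2)
  else
    (σ.1, σ.1 + σ.2.1, σ.2.2.1, σ.2.2.1 + σ.2.2.2)

noncomputable def traj (α : ℝ) : ℕ → ℕ × ℕ × ℤ × ℤ
  | 0 => (1, 1, ⌊α⌋, ⌊α⌋ + 1)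
  | k + 1 => step α (traj α k)

/-- the condition for an "A" (below) step at state σ -/
def isA (α : ℝ) (σ : ℕ × ℕ × ℤ × ℤ) : Prop :=
  ((σ.2.2.1 + σ.2.2.2 : ℤ) : ℝ) < ((σ.1 + σ.2.1 : ℕ) : ℝ) * α

lemma step_of_isA {α : ℝ} {σ : ℕ × ℕ × ℤ × ℤ} (h : isA α σ) :
    step α σ = (σ.1 + σ.2.1, σ.2.1, σ.2.2.1 + σ.2.2.2, σ.2.2.2) := by
  unfold step
  exact if_pos h

lemma step_of_not_isA {α : ℝ} {σ : ℕ × ℕ × ℤ × ℤ} (h : ¬ isA α σ) :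
    step α σ = (σ.1, σ.1 + σ.2.1, σ.2.2.1, σ.2.2.1 + σ.2.2.2) := by
  unfold step
  exact if_neg h

def Good (α : ℝ) (σ : ℕ × ℕ × ℤ × ℤ) : Prop :=
  0 < σ.1 ∧ 0 < σ.2.1 ∧ ((σ.2.2.1 : ℝ)) < (σ.1 : ℝ) * α ∧
    (σ.2.1 : ℝ) * α < (σ.2.2.2 : ℝ) ∧
    σ.2.2.2 * (σ.1 : ℤ) - σ.2.2.1 * (σ.2.1 : ℤ) = 1

lemma good_step {α : ℝ} (hirr : Irrational α) {σ : ℕ × ℕ × ℤ × ℤ}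
    (hg : Good α σ) : Good α (step α σ) := by
  obtain ⟨hq, hr, hθ, hδ, hdet⟩ := hg
  by_cases h : isA α σ
  · rw [step_of_isA h]
    unfold Good
    dsimp only
    refine ⟨by omega, hr, ?_, hδ, by push_cast; push_cast at hdet; linarith⟩
    have := h
    unfold isA at this
    push_cast at this ⊢
    linarith
  · rw [step_of_not_isA h]
    unfold Good
    dsimp only
    have hne : ((σ.2.2.1 + σ.2.2.2 : ℤ) : ℝ) ≠ ((σ.1 + σ.2.1 : ℕ) : ℝ) * α := by
      intro hc
      have hm0 : σ.1 + σ.2.1 ≠ 0 := by omega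
      have hirr2 : Irrational (((σ.1 + σ.2.1 : ℕ) : ℝ) * α) := hirr.natCast_mul hm0
      exact hirr2.ne_int _ hc.symm
    have hlt : ((σ.1 + σ.2.1 : ℕ) : ℝ) * α < ((σ.2.2.1 + σ.2.2.2 : ℤ) : ℝ) :=
      lt_of_le_of_ne (not_lt.mp h) (fun hc => hne hc.symm)
    refine ⟨hq, by omega, hθ, ?_, by push_cast; push_cast at hdet; linarith⟩
    push_cast at hlt ⊢
    linarith

lemma good_traj {α : ℝ} (hirr : Irrational α) : ∀ k, Good α (traj α k) := by
  intro k
  induction k with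
  | zero =>
    show Good α (1, 1, ⌊α⌋, ⌊α⌋ + 1)
    unfold Good
    dsimp only
    have h1 : ((⌊α⌋ : ℝ)) < α := lt_of_le_of_ne (Int.floor_le α) (fun hc => hirr.ne_int _ hc.symm)
    have h2 : α < (⌊α⌋ : ℝ) + 1 := Int.lt_floor_add_one α
    exact ⟨one_pos, one_pos, by push_cast; linarith, by push_cast; linarith, by push_cast; ring⟩
  | succ k ih => exact good_step hirr ih

lemma exists_notA_ge {α : ℝ} (hirr : Irrational α) (k : ℕ) :
    ∃ j, k ≤ j ∧ ¬ isA α (traj α j) := by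
  by_contra hc
  push_neg at hc
  obtain ⟨hq0, hr0, hθ0, hδ0, hdet0⟩ := good_traj hirr k
  have H : ∀ i : ℕ, traj α (k + i) =
      ((traj α k).1 + i * (traj α k).2.1, (traj α k).2.1,
        (traj α k).2.2.1 + (i : ℤ) * (traj α k).2.2.2, (traj α k).2.2.2) := by
    intro i
    induction i with
    | zero => simp
    | succ i ih =>
      have hA := hc (k + i) (Nat.le_add_right _ _)
      rw [ih] at hA
      rw [show k + (i + 1) = (k + i) + 1 by ring, traj, ih, step_of_isA hA]
      simp only [Prod.mk.injEq]
      refine ⟨by ring, trivial, ?_, trivial⟩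
      push_cast
      ring
  -- contradiction: i * δ < θ for all i
  set q0 := (traj α k).1
  set r0 := (traj α k).2.1
  set p0 := (traj α k).2.2.1
  set s0 := (traj α k).2.2.2
  have hδpos : (0:ℝ) < (s0 : ℝ) - (r0 : ℝ) * α := by linarith
  obtain ⟨i, hi⟩ := exists_nat_gt (((q0 : ℝ) * α - (p0 : ℝ)) / ((s0 : ℝ) - (r0 : ℝ) * α))
  have hgi := (good_traj hirr (k + i)).2.2.1
  rw [H i] at hgi
  dsimp only at hgi
  push_cast at hgi
  have h2 : (q0 : ℝ) * α - (p0 : ℝ) < i * ((s0 : ℝ) - (r0 : ℝ) * α) :=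
    (div_lt_iff₀ hδpos).mp hi
  nlinarith

lemma exists_A_ge {α : ℝ} (hirr : Irrational α) (k : ℕ) :
    ∃ j, k ≤ j ∧ isA α (traj α j) := by
  by_contra hc
  push_neg at hc
  obtain ⟨hq0, hr0, hθ0, hδ0, hdet0⟩ := good_traj hirr k
  have H : ∀ i : ℕ, traj α (k + i) =
      ((traj α k).1, (traj α k).2.1 + i * (traj α k).1,
        (traj α k).2.2.1, (traj α k).2.2.2 + (i : ℤ) * (traj α k).2.2.1) := by
    intro i
    induction i with
    | zero => simp
    | succ i ih =>
      have hA := hc (k + i) (Nat.le_add_right _ _)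
      rw [ih] at hA
      rw [show k + (i + 1) = (k + i) + 1 by ring, traj, ih, step_of_not_isA hA]
      simp only [Prod.mk.injEq]
      refine ⟨trivial, by ring, trivial, ?_⟩
      push_cast
      ring
  set q0 := (traj α k).1
  set r0 := (traj α k).2.1
  set p0 := (traj α k).2.2.1
  set s0 := (traj α k).2.2.2
  have hθpos : (0:ℝ) < (q0 : ℝ) * α - (p0 : ℝ) := by linarith
  obtain ⟨i, hi⟩ := exists_nat_gt (((s0 : ℝ) - (r0 : ℝ) * α) / ((q0 : ℝ) * α - (p0 : ℝ)))
  have hgi := (good_traj hirr (k + i)).2.2.2.1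
  rw [H i] at hgi
  dsimp only at hgi
  push_cast at hgi
  have h2 : (s0 : ℝ) - (r0 : ℝ) * α < i * ((q0 : ℝ) * α - (p0 : ℝ)) :=
    (div_lt_iff₀ hθpos).mp hi
  nlinarith

lemma r_mono {α : ℝ} : Monotone (fun k => (traj α k).2.1) := by
  apply monotone_nat_of_le_succ
  intro k
  by_cases h : isA α (traj α k)
  · rw [traj, step_of_isA h]
  · rw [traj, step_of_not_isA h]; dsimp only; omega

lemma r_unbounded {α : ℝ} (hirr : Irrational α) (B : ℕ) :
    ∃ k, B ≤ (traj α k).2.1 := by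
  induction B with
  | zero => exact ⟨0, Nat.zero_le _⟩
  | succ B ih =>
    obtain ⟨k, hk⟩ := ih
    obtain ⟨j, hjk, hA⟩ := exists_notA_ge hirr k
    refine ⟨j + 1, ?_⟩
    have hq := (good_traj hirr j).1
    have hmono := r_mono (α := α) hjk
    rw [traj, step_of_not_isA hA]
    dsimp only at *
    omega

lemma key_irr {α : ℝ} (h0 : 0 < α) (hirr : Irrational α) (B : ℕ) :
    ∃ X L : ℕ, B ≤ X ∧ 0 < X ∧ 0 < L ∧ (L:ℝ) - 1/(X:ℝ) ≤ (X:ℝ)*α ∧ (X:ℝ)*α ≤ (L:ℝ) := by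
  obtain ⟨k, hk⟩ := r_unbounded hirr B
  obtain ⟨j, hjk, hA⟩ := exists_A_ge hirr k
  have hmono := r_mono (α := α) hjk
  have hstep : traj α (j+1) = ((traj α j).1 + (traj α j).2.1, (traj α j).2.1,
      (traj α j).2.2.1 + (traj α j).2.2.2, (traj α j).2.2.2) := by
    rw [traj, step_of_isA hA]
  obtain ⟨hq1, hr1, hθ1, hδ1, hdet1⟩ := good_traj hirr (j+1)
  rw [hstep] at hq1 hr1 hθ1 hδ1 hdet1
  dsimp only at hq1 hr1 hθ1 hδ1 hdet1 hmono
  set q0 := (traj α j).1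
  set r0 := (traj α j).2.1
  set p0 := (traj α j).2.2.1
  set s0 := (traj α j).2.2.2
  -- δ = s0 - r0 α > 0 ; θ = (q0+r0)α - (p0+s0) > 0 ; det: s0(q0+r0) - (p0+s0) r0 = 1
  have hdetR : (s0 : ℝ) * ((q0:ℝ) + (r0:ℝ)) - ((p0:ℝ) + (s0:ℝ)) * (r0:ℝ) = 1 := by
    exact_mod_cast hdet1
  push_cast at hθ1 hδ1
  have hrpos : (0:ℝ) < (r0:ℝ) := by exact_mod_cast hr1
  have hqnn : (0:ℝ) ≤ (q0:ℝ) := Nat.cast_nonneg _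
  have hrq : (r0:ℝ) ≤ (q0:ℝ) + (r0:ℝ) := by linarith
  -- δ * r0 < 1
  have hδ : (0:ℝ) < (s0:ℝ) - (r0:ℝ)*α := by linarith
  have hθ : (0:ℝ) < ((q0:ℝ)+(r0:ℝ))*α - ((p0:ℝ)+(s0:ℝ)) := by linarith
  have hkey : ((s0:ℝ) - (r0:ℝ)*α) * (r0:ℝ) < 1 := by nlinarith
  have hslt : (s0:ℝ) - 1/(r0:ℝ) ≤ (r0:ℝ)*α := by
    have h1 : (s0:ℝ) - (r0:ℝ)*α < 1/(r0:ℝ) := by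
      rw [lt_div_iff₀ hrpos]; linarith
    linarith
  have hs_pos : (0:ℤ) < s0 := by
    have : (0:ℝ) < (s0:ℝ) := lt_trans (by positivity) hδ1
    exact_mod_cast this
  have hcast : ((s0.toNat : ℕ) : ℝ) = (s0 : ℝ) := by
    exact_mod_cast congrArg (Int.cast : ℤ → ℝ) (Int.toNat_of_nonneg hs_pos.le)
  refine ⟨r0, s0.toNat, by omega, hr1, by omega, ?_, ?_⟩
  · rw [hcast]; exact hslt
  · rw [hcast]; linarith
lemma key_rat {α : ℝ} (h0 : 0 < α) (x : ℚ) (hx : (x:ℝ) = α) (B : ℕ) :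
    ∃ X L : ℕ, B ≤ X ∧ 0 < X ∧ 0 < L ∧ (L:ℝ) - 1/(X:ℝ) ≤ (X:ℝ)*α ∧ (X:ℝ)*α ≤ (L:ℝ) := by
  have hxpos : 0 < x := by
    rw [← hx] at h0; exact_mod_cast h0
  have hnum : 0 < x.num := Rat.num_pos.mpr hxpos
  have hden : 0 < x.den := x.den_pos
  refine ⟨(B+1) * x.den, (B+1) * x.num.toNat, ?_, ?_, ?_, ?_, ?_⟩
  · calc B ≤ B + 1 := Nat.le_succ B
      _ ≤ (B+1) * x.den := Nat.le_mul_of_pos_right _ hden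
  · positivity
  · have : 0 < x.num.toNat := by omega
    positivity
  all_goals {
    have hXL : (((B+1) * x.den : ℕ) : ℝ) * α = (((B+1) * x.num.toNat : ℕ) : ℝ) := by
      rw [← hx, Rat.cast_def]
      have h1 : ((x.num.toNat : ℕ) : ℝ) = (x.num : ℝ) := by
        exact_mod_cast congrArg (Int.cast : ℤ → ℝ) (Int.toNat_of_nonneg hnum.le)
      have h2 : ((x.den : ℕ) : ℝ) ≠ 0 := by positivity
      push_cast [h1]
      field_simp
    have hXpos : (0:ℝ) < (((B+1) * x.den : ℕ) : ℝ) := by positivity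
    rw [hXL] <;> try linarith [one_div_pos.mpr hXpos]
  }

lemma key {α : ℝ} (h0 : 0 < α) (B : ℕ) :
    ∃ X L : ℕ, B ≤ X ∧ 0 < X ∧ 0 < L ∧ (L:ℝ) - 1/(X:ℝ) ≤ (X:ℝ)*α ∧ (X:ℝ)*α ≤ (L:ℝ) := by
  by_cases hirr : Irrational α
  · exact key_irr h0 hirr B
  · obtain ⟨x, hx⟩ := not_not.mp hirr
    exact key_rat h0 x hx B

end EquiCode

/-- Theorem 3(b): for an equiprobable source with `m` symbols and output
alphabet of size `n`, there are infinitely many pairs `(X, L)` with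
`L - 1/X ≤ X log_n m ≤ L`; for each such pair one can injectively encode all
`m^X` input words of length `X` by output words of length `L`, and the
resulting uniform-on-the-output code has redundancy
`R = L/X - log_n m ≤ N̄⁻² = X⁻²`. -/
theorem equiprobable_uniform_output_code (m n : ℕ) (hm : 2 ≤ m) (hn : 2 ≤ n) :
    {q : ℕ × ℕ | 0 < q.1 ∧ 0 < q.2 ∧
        (q.2 : ℝ) - 1 / (q.1 : ℝ) ≤ (q.1 : ℝ) * Real.logb n m ∧
        (q.1 : ℝ) * Real.logb n m ≤ (q.2 : ℝ)}.Infinite ∧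
    ∀ X L : ℕ, 0 < X → 0 < L →
      (L : ℝ) - 1 / (X : ℝ) ≤ (X : ℝ) * Real.logb n m →
      (X : ℝ) * Real.logb n m ≤ (L : ℝ) →
      (∃ φ : (Fin X → Fin m) → (Fin L → Fin n), Function.Injective φ) ∧
      (L : ℝ) / (X : ℝ) - Real.logb n m ≤ ((X : ℝ)⁻¹) ^ 2 := by
  have hn1 : (1:ℝ) < (n:ℝ) := by exact_mod_cast (by omega : 1 < n)
  have hm1 : (1:ℝ) < (m:ℝ) := by exact_mod_cast (by omega : 1 < m)
  have h0 : 0 < Real.logb n m := Real.logb_pos hn1 hm1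
  constructor
  · -- infinitude
    by_contra hfin
    rw [Set.not_infinite] at hfin
    have himg : (Prod.fst '' {q : ℕ × ℕ | 0 < q.1 ∧ 0 < q.2 ∧
        (q.2 : ℝ) - 1 / (q.1 : ℝ) ≤ (q.1 : ℝ) * Real.logb n m ∧
        (q.1 : ℝ) * Real.logb n m ≤ (q.2 : ℝ)}).Finite := hfin.image _
    obtain ⟨c, hc⟩ := himg.bddAbove
    obtain ⟨X, L, hBX, hX, hL, h1, h2⟩ := EquiCode.key h0 (c + 1)
    have hmem : X ∈ Prod.fst '' {q : ℕ × ℕ | 0 < q.1 ∧ 0 < q.2 ∧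
        (q.2 : ℝ) - 1 / (q.1 : ℝ) ≤ (q.1 : ℝ) * Real.logb n m ∧
        (q.1 : ℝ) * Real.logb n m ≤ (q.2 : ℝ)} := ⟨(X, L), ⟨hX, hL, h1, h2⟩, rfl⟩
    have := hc hmem
    omega
  · intro X L hX hL h1 h2
    have hXpos : (0:ℝ) < (X:ℝ) := by exact_mod_cast hX
    constructor
    · -- embedding
      have hlogn : (0:ℝ) < Real.log n := Real.log_pos hn1
      have h3 : (X:ℝ) * Real.log m ≤ (L:ℝ) * Real.log n := by
        rw [Real.logb, ← mul_div_assoc] at h2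
        exact (div_le_iff₀ hlogn).mp h2
      have h4 : ((m:ℝ)) ^ X ≤ ((n:ℝ)) ^ L := by
        rw [← Real.log_le_log_iff (by positivity) (by positivity),
          Real.log_pow, Real.log_pow]
        exact h3
      have h5 : m ^ X ≤ n ^ L := by exact_mod_cast h4
      have hcard : Fintype.card (Fin X → Fin m) ≤ Fintype.card (Fin L → Fin n) := by
        simp only [Fintype.card_fun, Fintype.card_fin]
        exact h5
      obtain ⟨f⟩ := Function.Embedding.nonempty_of_card_le hcard
      exact ⟨f, f.injective⟩
    · -- redundancy
      have hinv : (X:ℝ)⁻¹ * (X:ℝ) = 1 := inv_mul_cancel₀ (ne_of_gt hXpos)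
      rw [sub_le_iff_le_add, div_le_iff₀ hXpos]
      have hexp : (((X:ℝ)⁻¹) ^ 2 + Real.logb n m) * (X:ℝ)
          = (X:ℝ) * Real.logb n m + (X:ℝ)⁻¹ := by
        field_simp
        ring
      rw [hexp]
      have : 1 / (X:ℝ) = (X:ℝ)⁻¹ := one_div _
      linarith
end
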